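/- For the function f(q) = q⁻¹ defined on ℍ \ {0}, at every q ≠ 0 the left GHR derivatives are ∂f/∂q = −q⁻¹ · Re(q⁻¹) and ∂f/∂q* = 1/(2|q|²). -/

import Mathlib

/-!
The real derivative of `p ↦ p⁻¹` at `q` is `v ↦ -q⁻¹ v q⁻¹`, and for any real-linear map of the
form `v ↦ a v b` the GHR derivatives collapse to `a · ¼(b ∓ i b i ∓ j b j ∓ k b k)`. The
averages `¼(x - i x i - j x j - k x k) = Re x` and `¼(x + i x i + j x j + k x k) = -½ x*` then
give `-q⁻¹ Re(q⁻¹)` and `½ q⁻¹ (q⁻¹)* = 1/(2|q|²)`.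
-/

open scoped Quaternion

noncomputable section

/-- The imaginary unit `i` of the quaternions. -/
def qI : ℍ[ℝ] := ⟨0, 1, 0, 0⟩
/-- The imaginary unit `j` of the quaternions. -/
def qJ : ℍ[ℝ] := ⟨0, 0, 1, 0⟩
/-- The imaginary unit `k` of the quaternions. -/
def qK : ℍ[ℝ] := ⟨0, 0, 0, 1⟩

/-- Left GHR derivative `∂f/∂q^μ` of a quaternion function of a quaternion variable:
`¼(∂f/∂q_a − (∂f/∂q_b) i^μ − (∂f/∂q_c) j^μ − (∂f/∂q_d) k^μ)`, with `x^μ = μ x μ⁻¹`, the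
partials being the real directional (Fréchet) derivatives in directions `1, i, j, k`. -/
def ghrS (μ : ℍ[ℝ]) (f : ℍ[ℝ] → ℍ[ℝ]) (q : ℍ[ℝ]) : ℍ[ℝ] :=
  (1 / 4 : ℝ) • (fderiv ℝ f q 1 - fderiv ℝ f q qI * (μ * qI * μ⁻¹)
    - fderiv ℝ f q qJ * (μ * qJ * μ⁻¹) - fderiv ℝ f q qK * (μ * qK * μ⁻¹))

/-- Conjugate left GHR derivative `∂f/∂q^{μ*}` of a quaternion function of a quaternion
variable. -/
def ghrSStar (μ : ℍ[ℝ]) (f : ℍ[ℝ] → ℍ[ℝ]) (q : ℍ[ℝ]) : ℍ[ℝ] :=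
  (1 / 4 : ℝ) • (fderiv ℝ f q 1 + fderiv ℝ f q qI * (μ * qI * μ⁻¹)
    + fderiv ℝ f q qJ * (μ * qJ * μ⁻¹) + fderiv ℝ f q qK * (μ * qK * μ⁻¹))

@[simp] lemma qI_re : qI.re = 0 := rfl
@[simp] lemma qI_imI : qI.imI = 1 := rfl
@[simp] lemma qI_imJ : qI.imJ = 0 := rfl
@[simp] lemma qI_imK : qI.imK = 0 := rfl

@[simp] lemma qJ_re : qJ.re = 0 := rfl
@[simp] lemma qJ_imI : qJ.imI = 0 := rfl
@[simp] lemma qJ_imJ : qJ.imJ = 1 := rfl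
@[simp] lemma qJ_imK : qJ.imK = 0 := rfl

@[simp] lemma qK_re : qK.re = 0 := rfl
@[simp] lemma qK_imI : qK.imI = 0 := rfl
@[simp] lemma qK_imJ : qK.imJ = 0 := rfl
@[simp] lemma qK_imK : qK.imK = 1 := rfl

lemma smul_sub_basis_conj_eq_re (x : ℍ[ℝ]) :
    (1 / 4 : ℝ) • (x - qI * x * qI - qJ * x * qJ - qK * x * qK) = (x.re : ℍ[ℝ]) := by
  ext <;> simp
  ring

lemma smul_add_basis_conj_eq_star (x : ℍ[ℝ]) :
    (1 / 4 : ℝ) • (x + qI * x * qI + qJ * x * qJ + qK * x * qK) = -((1 / 2 : ℝ) • star x) := by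
  ext <;> (simp; ring)

section

variable {f : ℍ[ℝ] → ℍ[ℝ]} {q a b : ℍ[ℝ]}

lemma ghrS_one_of_fderiv_eq_mul_mul (hf : ∀ v, fderiv ℝ f q v = a * v * b) :
    ghrS 1 f q = a * (b.re : ℍ[ℝ]) := by
  rw [← smul_sub_basis_conj_eq_re, mul_smul_comm, ghrS]
  simp only [hf, mul_one, one_mul, inv_one]
  noncomm_ring

lemma ghrSStar_one_of_fderiv_eq_mul_mul (hf : ∀ v, fderiv ℝ f q v = a * v * b) :
    ghrSStar 1 f q = -((1 / 2 : ℝ) • (a * star b)) := by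
  rw [← mul_smul_comm, ← mul_neg, ← smul_add_basis_conj_eq_star, mul_smul_comm, ghrSStar]
  simp only [hf, mul_one, one_mul, inv_one]
  noncomm_ring

end

lemma fderiv_inv_apply {q : ℍ[ℝ]} (hq : q ≠ 0) (v : ℍ[ℝ]) :
    fderiv ℝ (fun p : ℍ[ℝ] => p⁻¹) q v = -q⁻¹ * v * q⁻¹ := by
  simp [fderiv_inv' hq]

/-- **GHR derivatives of `f(q) = q⁻¹`** at `q ≠ 0`:
`∂f/∂q = −q⁻¹ Re(q⁻¹)` and `∂f/∂q* = 1/(2|q|²)`. -/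
theorem ghr_inv (q : ℍ[ℝ]) (hq : q ≠ 0) :
    ghrS (1 : ℍ[ℝ]) (fun p => p⁻¹) q = -(q⁻¹ * ((q⁻¹).re : ℍ[ℝ]))
    ∧ ghrSStar (1 : ℍ[ℝ]) (fun p => p⁻¹) q = ((1 / (2 * ‖q‖ ^ 2) : ℝ) : ℍ[ℝ]) := by
  constructor
  · rw [ghrS_one_of_fderiv_eq_mul_mul (fderiv_inv_apply hq), neg_mul]
  · rw [ghrSStar_one_of_fderiv_eq_mul_mul (fderiv_inv_apply hq), neg_mul, smul_neg, neg_neg,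
      Quaternion.self_mul_star, Quaternion.smul_coe, Quaternion.normSq_inv,
      Quaternion.normSq_eq_norm_mul_self]
    congr 1
    field_simp
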